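/- Let H be a Hilbert space, V a bounded nonnegative multiplication-type operator written as W·W with W = V^{1/2} bounded and self-adjoint, and let z ∈ ℂ with Im z > 0. Suppose φ ∈ H satisfies φ = W (H_0 - z)^{-1} W φ, where H_0 is a self-adjoint operator. Then φ = 0. -/

import Mathlib

/-! Put `ψ = R (W φ)`, so that `(H₀ - z) ψ = W φ` and `φ = W ψ`. Since `W` is self-adjoint,
`‖φ‖² = ⟪W φ, ψ⟫ = ⟪(H₀ - z) ψ, ψ⟫`, and as `⟪H₀ ψ, ψ⟫` is real the imaginary part of the right
side is `Im z · ‖ψ‖²`. Hence `ψ = 0`, and then `φ = W ψ = 0`. -/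

section

open ContinuousLinearMap

variable {H : Type*} [NormedAddCommGroup H] [InnerProductSpace ℂ H] [CompleteSpace H]

theorem IsSelfAdjoint.im_inner_sub_smul_apply_self {A : H →L[ℂ] H} (hA : IsSelfAdjoint A)
    (z : ℂ) (x : H) : (inner ℂ ((A - z • 1) x) x).im = z.im * ‖x‖ ^ 2 := by
  have hA_real : ((inner ℂ (A x) x).re : ℂ) = inner ℂ (A x) x :=
    hA.isSymmetric.coe_re_inner_apply_self x
  have hA_im : (inner ℂ (A x) x).im = 0 := by
    rw [← hA_real, Complex.ofReal_im]
  rw [sub_apply, smul_apply, one_apply_eq_self]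
  simp only [inner_sub_left, inner_smul_left, Complex.sub_im, Complex.mul_im, Complex.conj_re,
    Complex.conj_im, hA_im]
  have hx_im : (inner ℂ x x).im = 0 := inner_self_im (𝕜 := ℂ) x
  have hx_re : (inner ℂ x x).re = ‖x‖ ^ 2 := inner_self_eq_norm_sq (𝕜 := ℂ) x
  rw [hx_im, hx_re]
  ring

theorem eq_zero_of_sub_smul_apply_eq_of_eq_apply {A W : H →L[ℂ] H} (hA : IsSelfAdjoint A)
    (hW : IsSelfAdjoint W) {z : ℂ} (hz : z.im ≠ 0) {φ ψ : H} (hψ : (A - z • 1) ψ = W φ)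
    (hφ : φ = W ψ) : ψ = 0 := by
  have h_inner : inner ℂ φ φ = inner ℂ ((A - z • 1) ψ) ψ := by
    rw [hψ, ← hW.adjoint_eq, adjoint_inner_left, ← hφ]
  have h_im : z.im * ‖ψ‖ ^ 2 = 0 := by
    rw [← hA.im_inner_sub_smul_apply_self, ← h_inner]
    exact inner_self_im (𝕜 := ℂ) φ
  simpa [hz] using h_im

end

theorem stmt12_general {H : Type*} [NormedAddCommGroup H] [InnerProductSpace ℂ H] [CompleteSpace H]
    (H₀ W R : H →L[ℂ] H) (hH₀ : IsSelfAdjoint H₀) (hW : IsSelfAdjoint W)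
    (z : ℂ) (hz : 0 < z.im)
    (hR1 : (H₀ - z • (1 : H →L[ℂ] H)) * R = 1)
    (φ : H) (hφ : φ = W (R (W φ))) : φ = 0 := by
  have hψ : (H₀ - z • 1) (R (W φ)) = W φ := congr($hR1 (W φ))
  have hψ_zero := eq_zero_of_sub_smul_apply_eq_of_eq_apply hH₀ hW hz.ne' hψ hφ
  rw [hφ, hψ_zero, map_zero]

theorem stmt12 {H : Type*} [NormedAddCommGroup H] [InnerProductSpace ℂ H] [CompleteSpace H]
    (H₀ V W R : H →L[ℂ] H) (hH₀ : IsSelfAdjoint H₀) (hW : IsSelfAdjoint W)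
    (hV : V = W * W)
    (z : ℂ) (hz : 0 < z.im)
    (hR1 : (H₀ - z • (1 : H →L[ℂ] H)) * R = 1)
    (hR2 : R * (H₀ - z • (1 : H →L[ℂ] H)) = 1)
    (φ : H) (hφ : φ = W (R (W φ))) : φ = 0 :=
  stmt12_general H₀ W R hH₀ hW z hz hR1 φ hφ
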